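/- Let p be a prime, R a commutative ring of characteristic p, σ a finite index type, and i ∈ σ. Write e_i : σ →₀ ℕ for the indicator function of i, so that D_{p·e_i} is the divided-power operator of order p in the variable X_i. Then for all h, f ∈ MvPolynomial σ R one has D_{p·e_i}(h^p * f) = h^p * D_{p·e_i}(f) + (∂_i h)^p * f, where ∂_i denotes the partial derivative with respect to X_i; equivalently, the commutator of D_{p·e_i} with multiplication by h^p is multiplication by (∂_i h)^p. -/

import Mathlib

/-!
Both sides are additive in `h`, since `h ↦ h ^ p` and `h ↦ (∂ᵢ h) ^ p` are additive in
characteristic `p`, and additive in `f`; so it suffices to take monomials `h = c X^m` and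
`f = d X^k`. Then everything is a multiple of `X^(p m + k - p eᵢ)`, and the identity of
coefficients is Lucas' congruence `C(p a + b, p) ≡ a + C(b, p) (mod p)` for `a = mᵢ`, `b = kᵢ`,
together with `mᵢ ^ p = mᵢ` in `R`.
-/

/-- The divided-power operator `D_n` on `MvPolynomial σ R`, determined on monomials by
`D_n (X ^ m) = (∏ i, Nat.choose (m i) (n i)) • X ^ (m - n)` (componentwise truncated
subtraction). -/
noncomputable def dpOp (R : Type*) [CommRing R] (σ : Type*) [Fintype σ] (n : σ →₀ ℕ) :
    MvPolynomial σ R →ₗ[R] MvPolynomial σ R :=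
  (Finsupp.lsum ℕ fun m : σ →₀ ℕ =>
    (∏ i, Nat.choose (m i) (n i)) • (MvPolynomial.monomial (m - n) : R →ₗ[R] MvPolynomial σ R))
    ∘ₗ (AddMonoidAlgebra.coeffLinearEquiv R).toLinearMap

open MvPolynomial Finsupp

theorem Nat.cast_choose_prime_mul_add {p : ℕ} (hp : p.Prime) (R : Type*) [AddMonoidWithOne R]
    [CharP R p] (a b : ℕ) : ((p * a + b).choose p : R) = a + b.choose p := by
  have : Fact p.Prime := ⟨hp⟩
  have lucas (n : ℕ) : n.choose p ≡ n / p [MOD p] := by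
    simpa [Nat.mod_self, Nat.div_self hp.pos] using
      Choose.choose_modEq_choose_mod_mul_choose_div_nat (n := n) (k := p) (p := p)
  have h₁ := lucas (p * a + b)
  rw [Nat.mul_add_div hp.pos] at h₁
  exact_mod_cast CharP.natCast_eq_natCast' R p (h₁.trans ((lucas b).symm.add_left a))

theorem Finsupp.nsmul_tsub_single_one_add {σ : Type*} (p : ℕ) {m : σ →₀ ℕ} {i : σ}
    (hm : single i 1 ≤ m) (k : σ →₀ ℕ) :
    p • (m - single i 1) + k = p • m + k - single i p := by
  rw [← smul_single_one i p, ← tsub_add_eq_add_tsub (nsmul_le_nsmul_right hm p)]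
  congr 1
  ext j
  simp only [coe_smul, coe_tsub, Pi.smul_apply, Pi.sub_apply, smul_eq_mul, Nat.mul_sub]

theorem MvPolynomial.monomial_congr_of_ne_zero {σ R : Type*} [CommSemiring R] {s t : σ →₀ ℕ}
    {a : R} (h : a ≠ 0 → s = t) : monomial s a = monomial t a := by
  by_cases ha : a = 0
  · simp [ha]
  · rw [h ha]

section dpOp

variable {R σ : Type*} [CommRing R] [Fintype σ]

theorem dpOp_monomial (n m : σ →₀ ℕ) (c : R) :
    dpOp R σ n (monomial m c) = (∏ j, (m j).choose (n j)) • monomial (m - n) c := by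
  rw [dpOp, LinearMap.comp_apply, ← single_eq_monomial]
  exact Finsupp.lsum_single ..

theorem dpOp_single_monomial (i : σ) (p : ℕ) (m : σ →₀ ℕ) (c : R) :
    dpOp R σ (single i p) (monomial m c) = monomial (m - single i p) ((m i).choose p • c) := by
  rw [dpOp_monomial, smul_monomial, Fintype.prod_eq_single i fun j hj => by simp [hj]]
  simp

theorem dpOp_single_monomial_pow_mul {p : ℕ} (hp : p.Prime) [CharP R p] (i : σ)
    (m k : σ →₀ ℕ) (c d : R) :
    dpOp R σ (single i p) (monomial m c ^ p * monomial k d)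
      = monomial m c ^ p * dpOp R σ (single i p) (monomial k d)
        + pderiv i (monomial m c) ^ p * monomial k d := by
  rw [pderiv_monomial, monomial_pow, monomial_pow, monomial_mul, monomial_mul,
    dpOp_single_monomial, dpOp_single_monomial, monomial_mul]
  have hk : monomial (p • m + (k - single i p)) (c ^ p * ((k i).choose p • d))
      = monomial (p • m + k - single i p) (c ^ p * ((k i).choose p • d)) := by
    refine monomial_congr_of_ne_zero fun h => (add_tsub_assoc_of_le (single_le_iff.2 ?_) _).symm
    by_contra hlt
    simp [Nat.choose_eq_zero_of_lt (not_le.1 hlt)] at h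
  have hm : monomial (p • (m - single i 1) + k) ((c * m i) ^ p * d)
      = monomial (p • m + k - single i p) ((c * m i) ^ p * d) := by
    refine monomial_congr_of_ne_zero fun h => nsmul_tsub_single_one_add p (single_le_iff.2 ?_) k
    by_contra h0
    simp [Nat.lt_one_iff.1 (not_le.1 h0), hp.ne_zero] at h
  have hfrob : (m i : R) ^ p = m i := by
    have : Fact p.Prime := ⟨hp⟩
    rw [← frobenius_def, map_natCast]
  rw [hk, hm, ← map_add]
  congr 1
  simp only [Finsupp.add_apply, Finsupp.smul_apply, smul_eq_mul, nsmul_eq_mul,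
    Nat.cast_choose_prime_mul_add hp, mul_pow, hfrob]
  ring

end dpOp

/-- In characteristic `p`, the commutator of `D_(p·e_i)` with multiplication by `h^p` is
multiplication by `(∂_i h)^p`:  `D_(p·e_i) (h^p * f) = h^p * D_(p·e_i) f + (∂_i h)^p * f`. -/
theorem dpOp_p_single_pow_mul (p : ℕ) (hp : p.Prime) (R : Type*) [CommRing R] [CharP R p]
    (σ : Type*) [Fintype σ] (i : σ) (h f : MvPolynomial σ R) :
    dpOp R σ (p • Finsupp.single i 1) (h ^ p * f)
      = h ^ p * dpOp R σ (p • Finsupp.single i 1) f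
        + (MvPolynomial.pderiv i h) ^ p * f := by
  have : Fact p.Prime := ⟨hp⟩
  rw [smul_single_one]
  induction h using MvPolynomial.induction_on' generalizing f with
  | monomial m c =>
    induction f using MvPolynomial.induction_on' with
    | monomial k d => exact dpOp_single_monomial_pow_mul hp i m k c d
    | add f g hf hg => simp only [mul_add, map_add, hf, hg]; ring
  | add g h hg hh => simp only [add_pow_char, add_mul, map_add, hg, hh]; ring
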